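/- Let (M,μ), (N,ν) be measure spaces and k : N × M → [0,∞] measurable with maximal rearrangement bound k₁*(x,t) ≤ k₁*(t) where k₁*(x,·) is the rearrangement of k(x,·) on M. If f : M → [0,∞] is measurable with μ(supp f) ≤ z and ‖f‖_∞ ≤ a, then for ν-a.e. x ∈ N, Tf(x) := ∫_M k(x,y) f(y) dμ(y) ≤ a ∫_0^z k₁*(x,v) dv. -/

import Mathlib

open MeasureTheory Set ENNReal

/-!
Both sides are computed by the layer-cake formula. On the left, the part of `k(x,·)` above
level `s` meets `supp f` in a set of measure at most `min (λ(s)) z`, where `λ(s) = μ {k(x,·) > s}`.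
On the right, right-continuity of `λ` gives `s < k₁*(x,t) ↔ t < λ(s)`, so the part of
`k₁*(x,·)` above level `s` inside `(0, z)` has length exactly `min (λ(s)) z`.
-/

lemma volume_setOf_ofReal_lt_inter_Ioi (c : ℝ≥0∞) :
    volume ({s : ℝ | ENNReal.ofReal s < c} ∩ Ioi 0) = c := by
  rcases eq_or_ne c ⊤ with rfl | hc
  · simp [ofReal_lt_top]
  · have : {s : ℝ | ENNReal.ofReal s < c} ∩ Ioi 0 = Ioo 0 c.toReal := by
      ext s
      simp only [mem_inter_iff, mem_ofPred_eq, mem_Ioi, mem_Ioo]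
      exact ⟨fun h => ⟨h.2, (ofReal_lt_iff_lt_toReal h.2.le hc).1 h.1⟩,
        fun h => ⟨(ofReal_lt_iff_lt_toReal h.1.le hc).2 h.2, h.1⟩⟩
    rw [this, Real.volume_Ioo, sub_zero, ofReal_toReal hc]

lemma volume_setOf_ofReal_lt_inter_Ioo (c : ℝ≥0∞) (z : ℝ) :
    volume ({t : ℝ | ENNReal.ofReal t < c} ∩ Ioo 0 z) = min c (ENNReal.ofReal z) := by
  rw [← volume_setOf_ofReal_lt_inter_Ioi (min c (ENNReal.ofReal z))]
  congr 1
  ext t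
  simp only [mem_inter_iff, mem_ofPred_eq, mem_Ioo, mem_Ioi, lt_min_iff, ofReal_lt_ofReal_iff']
  constructor
  · rintro ⟨hc, ht, htz⟩
    exact ⟨⟨hc, htz, ht.trans htz⟩, ht⟩
  · rintro ⟨⟨hc, htz, -⟩, ht⟩
    exact ⟨hc, ht, htz⟩

theorem lintegral_eq_lintegral_meas_ofReal_lt {α : Type*} [MeasurableSpace α] (μ : Measure α)
    [SFinite μ] {h : α → ℝ≥0∞} (hh : Measurable h) :
    ∫⁻ y, h y ∂μ = ∫⁻ s in Ioi 0, μ {y | ENNReal.ofReal s < h y} := by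
  set E : Set (α × ℝ) := {p | ENNReal.ofReal p.2 < h p.1}
  have hE : MeasurableSet E :=
    measurableSet_lt (ENNReal.measurable_ofReal.comp measurable_snd) (hh.comp measurable_fst)
  calc ∫⁻ y, h y ∂μ = ∫⁻ y, volume.restrict (Ioi 0) (Prod.mk y ⁻¹' E) ∂μ := by
        refine lintegral_congr fun y => ?_
        rw [Measure.restrict_apply (measurable_prodMk_left hE)]
        exact (volume_setOf_ofReal_lt_inter_Ioi (h y)).symm
    _ = μ.prod (volume.restrict (Ioi 0)) E := (Measure.prod_apply hE).symm
    _ = ∫⁻ s in Ioi 0, μ {y | ENNReal.ofReal s < h y} := Measure.prod_apply_symm hE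

section

variable {α : Type*} [MeasurableSpace α] {μ : Measure α}

/-- Right-continuity of the distribution function `σ ↦ μ {g > σ}`. -/
lemma exists_lt_measure_lt_of_lt_measure {g : α → ℝ≥0∞} {σ c : ℝ≥0∞}
    (h : c < μ {y | σ < g y}) : ∃ σ' > σ, c < μ {y | σ' < g y} := by
  have hσ : σ < ⊤ := by
    by_contra hσ
    simp [not_lt_top_iff.1 hσ] at h
  obtain ⟨u, hu_anti, hu_mem, hu_lim⟩ := exists_seq_strictAnti_tendsto' hσ
  have hunion : {y | σ < g y} = ⋃ n, {y | u n < g y} := by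
    ext y
    simp only [mem_ofPred_eq, mem_iUnion]
    exact ⟨fun hy => (hu_lim.eventually (gt_mem_nhds hy)).exists,
      fun ⟨n, hn⟩ => (hu_mem n).1.trans hn⟩
  have hmono : Monotone fun n => {y | u n < g y} :=
    fun m n hmn y hy => (hu_anti.antitone hmn).trans_lt hy
  rw [hunion, hmono.measure_iUnion] at h
  obtain ⟨n, hn⟩ := lt_iSup_iff.1 h
  exact ⟨u n, (hu_mem n).1, hn⟩

noncomputable def rearrangement (μ : Measure α) (g : α → ℝ≥0∞) (t : ℝ≥0∞) : ℝ≥0∞ :=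
  sInf {s | μ {y | s < g y} ≤ t}

lemma antitone_rearrangement (g : α → ℝ≥0∞) : Antitone (rearrangement μ g) :=
  fun _ _ hst => sInf_le_sInf fun _ hs => hs.trans hst

lemma lt_rearrangement_iff {g : α → ℝ≥0∞} {σ c : ℝ≥0∞} :
    σ < rearrangement μ g c ↔ c < μ {y | σ < g y} := by
  constructor
  · intro h
    by_contra! hc
    exact (sInf_le (show σ ∈ {s | μ {y | s < g y} ≤ c} from hc)).not_gt h
  · intro h
    obtain ⟨σ', hσσ', hσ'⟩ := exists_lt_measure_lt_of_lt_measure h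
    refine hσσ'.trans_le (le_sInf fun s hs => ?_)
    by_contra! hs'
    exact (hσ'.trans_le ((measure_mono fun y hy => hs'.trans hy).trans hs)).false

theorem setLIntegral_le_lintegral_rearrangement {g : α → ℝ≥0∞} (hg : Measurable g) {S : Set α}
    {z : ℝ} (hS : μ S ≤ ENNReal.ofReal z) :
    ∫⁻ y in S, g y ∂μ ≤ ∫⁻ t in Ioo 0 z, rearrangement μ g (ENNReal.ofReal t) := by
  have : IsFiniteMeasure (μ.restrict S) :=
    ⟨by rw [Measure.restrict_apply_univ]; exact hS.trans_lt ofReal_lt_top⟩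
  have hmeas : Measurable fun t : ℝ => rearrangement μ g (ENNReal.ofReal t) :=
    ((antitone_rearrangement g).comp_monotone fun _ _ => ofReal_le_ofReal).measurable
  rw [lintegral_eq_lintegral_meas_ofReal_lt _ hg, lintegral_eq_lintegral_meas_ofReal_lt _ hmeas]
  refine lintegral_mono fun s => ?_
  simp_rw [lt_rearrangement_iff]
  rw [Measure.restrict_apply (measurableSet_lt ENNReal.measurable_ofReal measurable_const),
    volume_setOf_ofReal_lt_inter_Ioo]
  exact le_min (Measure.restrict_apply_le _ _)
    ((measure_mono (subset_univ _)).trans (by rwa [Measure.restrict_apply_univ]))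

lemma lintegral_mul_le_mul_setLIntegral_ne_zero {f g : α → ℝ≥0∞} (hg : Measurable g)
    {c : ℝ≥0∞} (hf : ∀ᵐ y ∂μ, f y ≤ c) :
    ∫⁻ y, g y * f y ∂μ ≤ c * ∫⁻ y in {y | f y ≠ 0}, g y ∂μ := by
  have hsupp : Function.support (fun y => g y * f y) ⊆ {y | f y ≠ 0} :=
    fun y hy => right_ne_zero_of_mul hy
  calc ∫⁻ y, g y * f y ∂μ = ∫⁻ y in {y | f y ≠ 0}, g y * f y ∂μ :=
        (setLIntegral_eq_of_support_subset hsupp).symm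
    _ ≤ ∫⁻ y in {y | f y ≠ 0}, g y * c ∂μ :=
        lintegral_mono_ae ((ae_restrict_of_ae hf).mono fun y hy => by gcongr)
    _ = c * ∫⁻ y in {y | f y ≠ 0}, g y ∂μ := by rw [lintegral_mul_const _ hg, mul_comm]

end

theorem stmt_15_general {M N : Type*} [MeasurableSpace M] [MeasurableSpace N]
    (μ : Measure M) (ν : Measure N) (k : N → M → ℝ≥0∞)
    (hk : Measurable (Function.uncurry k))
    (f : M → ℝ≥0∞) (z a : ℝ)
    (hsupp : μ {y | f y ≠ 0} ≤ ENNReal.ofReal z)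
    (hbound : ∀ᵐ y ∂μ, f y ≤ ENNReal.ofReal a) :
    ∀ᵐ x ∂ν,
      (∫⁻ y, k x y * f y ∂μ)
        ≤ ENNReal.ofReal a *
            ∫⁻ t in Ioo (0 : ℝ) z,
              sInf {s : ℝ≥0∞ | μ {y | s < k x y} ≤ ENNReal.ofReal t} := by
  refine ae_of_all _ fun x => ?_
  have hkx : Measurable (k x) := hk.of_uncurry_left
  calc ∫⁻ y, k x y * f y ∂μ ≤ ENNReal.ofReal a * ∫⁻ y in {y | f y ≠ 0}, k x y ∂μ :=
        lintegral_mul_le_mul_setLIntegral_ne_zero hkx hbound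
    _ ≤ ENNReal.ofReal a * ∫⁻ t in Ioo 0 z, rearrangement μ (k x) (ENNReal.ofReal t) := by
        gcongr
        exact setLIntegral_le_lintegral_rearrangement hkx hsupp

/-- The Claim in the improved O'Neil lemma: if `μ(supp f) ≤ z` and `f ≤ a`, then
for `ν`-a.e. `x`, `Tf(x) = ∫_M k(x,y)f(y) dμ(y) ≤ a ∫_0^z k₁*(x,v) dv`, where
`k₁*(x,·)` is the nonincreasing rearrangement of `k(x,·)` on `(M,μ)`. -/
theorem stmt_15 {M N : Type*} [MeasurableSpace M] [MeasurableSpace N]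
    (μ : Measure M) (ν : Measure N) (k : N → M → ℝ≥0∞)
    (hk : Measurable (Function.uncurry k))
    (f : M → ℝ≥0∞) (hf : Measurable f) (z a : ℝ) (hz : 0 < z) (ha : 0 ≤ a)
    (hsupp : μ {y | f y ≠ 0} ≤ ENNReal.ofReal z)
    (hbound : ∀ᵐ y ∂μ, f y ≤ ENNReal.ofReal a) :
    ∀ᵐ x ∂ν,
      (∫⁻ y, k x y * f y ∂μ)
        ≤ ENNReal.ofReal a *
            ∫⁻ t in Ioo (0 : ℝ) z,
              sInf {s : ℝ≥0∞ | μ {y | s < k x y} ≤ ENNReal.ofReal t} :=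
  stmt_15_general μ ν k hk f z a hsupp hbound
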